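/- arXiv:2206.06449 — 5 statements merged into one kernel-verified Lean document; each statement's English description precedes it below -/
import Mathlib

section
/- Let V be a real vector space of dimension 2d+1, let α be a linear functional on V and β an alternating bilinear 2-form on V. Suppose X, Y₁ˢ,…,Y_dˢ, Y₁ᵘ,…,Y_dᵘ ∈ V satisfy α(X) = 1, α(Yᵢˢ) = α(Yⱼᵘ) = 0 for all i,j, β(Yᵢˢ, Yⱼˢ) = 0 and β(Yᵢᵘ, Yⱼᵘ) = 0 for all i,j, and moreover there exists m ≥ 1 such that β(Yᵢˢ, Yⱼᵘ) = 0 whenever i ≤ m. Then the (2d+1)-form α ∧ β^d evaluated on (X, Y₁ˢ,…,Y_dˢ, Y₁ᵘ,…,Y_dᵘ) equals 0. -/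
open Finset

/-- The family of vectors `X, Y₁ˢ, …, Y_dˢ, Y₁ᵘ, …, Y_dᵘ`. -/
noncomputable def stmtOneVec {V : Type*} (d : ℕ) (X : V) (Ys Yu : Fin d → V) :
    Fin (2 * d + 1) → V := fun k =>
  if h0 : (k : ℕ) = 0 then X
  else if hs : (k : ℕ) ≤ d then Ys ⟨(k : ℕ) - 1, by omega⟩
  else Yu ⟨(k : ℕ) - d - 1, by have := k.isLt; omega⟩

/-- If `α(X) = 1`, `α` vanishes on all the `Yᵢˢ, Yⱼᵘ`, the alternating 2-form `β`
vanishes on pairs of `Yˢ`'s, pairs of `Yᵘ`'s, and on pairs `(Yᵢˢ, Yⱼᵘ)` with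
`i ≤ m` for some `m ≥ 1`, then the `(2d+1)`-form `α ∧ β^d` (written out via the
permutation formula for the wedge product) vanishes on
`(X, Y₁ˢ, …, Y_dˢ, Y₁ᵘ, …, Y_dᵘ)`. -/
theorem stmt_1 (d m : ℕ) (hm1 : 1 ≤ m) (hmd : m ≤ d)
    (V : Type*) [AddCommGroup V] [Module ℝ V] [FiniteDimensional ℝ V]
    (hdim : Module.finrank ℝ V = 2 * d + 1)
    (α : V →ₗ[ℝ] ℝ) (β : V →ₗ[ℝ] V →ₗ[ℝ] ℝ)
    (hβalt : ∀ v : V, β v v = 0)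
    (X : V) (Ys Yu : Fin d → V)
    (hαX : α X = 1)
    (hαs : ∀ i, α (Ys i) = 0) (hαu : ∀ j, α (Yu j) = 0)
    (hss : ∀ i j, β (Ys i) (Ys j) = 0)
    (huu : ∀ i j, β (Yu i) (Yu j) = 0)
    (hsu : ∀ (i j : Fin d), (i : ℕ) < m → β (Ys i) (Yu j) = 0) :
    ∑ σ : Equiv.Perm (Fin (2 * d + 1)),
      ((Equiv.Perm.sign σ : ℤ) : ℝ) *
        (α (stmtOneVec d X Ys Yu (σ 0)) *
          ∏ i : Fin d,
            β (stmtOneVec d X Ys Yu (σ ⟨2 * (i : ℕ) + 1, by have := i.isLt; omega⟩))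
              (stmtOneVec d X Ys Yu (σ ⟨2 * (i : ℕ) + 2, by have := i.isLt; omega⟩)))
      = 0 := by
  set f := stmtOneVec d X Ys Yu with hf
  have hskew : ∀ x y : V, β x y = -β y x := by
    intro x y
    have h := hβalt (x + y)
    simp only [map_add, LinearMap.add_apply] at h
    have hx := hβalt x
    have hy := hβalt y
    linarith
  have hαzero : ∀ k : Fin (2 * d + 1), (k : ℕ) ≠ 0 → α (f k) = 0 := by
    intro k hk
    rw [hf, stmtOneVec, dif_neg hk]
    by_cases hkd : (k : ℕ) ≤ d
    · rw [dif_pos hkd]; exact hαs _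
    · rw [dif_neg hkd]; exact hαu _
  have hβzero : ∀ a b : Fin (2 * d + 1), (a : ℕ) ≠ 0 → (b : ℕ) ≠ 0 →
      ((a : ℕ) ≤ m ∨ (b : ℕ) ≤ m) → β (f a) (f b) = 0 := by
    intro a b ha hb hab
    simp only [hf, stmtOneVec]
    rw [dif_neg ha, dif_neg hb]
    by_cases had : (a : ℕ) ≤ d <;> by_cases hbd : (b : ℕ) ≤ d
    · rw [dif_pos had, dif_pos hbd]; exact hss _ _
    · rw [dif_pos had, dif_neg hbd]
      exact hsu _ _ (by simp only [Fin.val_mk]; omega)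
    · rw [dif_neg had, dif_pos hbd]
      rw [hskew, hsu _ _ (by simp only [Fin.val_mk]; omega), neg_zero]
    · rw [dif_neg had, dif_neg hbd]; exact huu _ _
  refine Finset.sum_eq_zero fun σ _ => ?_
  by_cases h0 : σ 0 = 0
  · -- find the pair containing index 1, whose factor vanishes
    have h3 : 1 < 2 * d + 1 := by omega
    set k := σ.symm ⟨1, h3⟩ with hkdef
    have hk : σ k = ⟨1, h3⟩ := σ.apply_symm_apply _
    have hk0 : (k : ℕ) ≠ 0 := by
      intro h
      have hk0' : k = 0 := Fin.ext (by simpa using h)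
      rw [hk0', h0] at hk
      have := congrArg Fin.val hk
      simp at this
    have hprod : ∀ t : Fin d,
        ((k : ℕ) = 2 * (t : ℕ) + 1 ∨ (k : ℕ) = 2 * (t : ℕ) + 2) →
        (∏ i : Fin d,
            β (f (σ ⟨2 * (i : ℕ) + 1, by have := i.isLt; omega⟩))
              (f (σ ⟨2 * (i : ℕ) + 2, by have := i.isLt; omega⟩))) = 0 := by
      intro t ht
      apply Finset.prod_eq_zero (Finset.mem_univ t)
      have hne1 : σ ⟨2 * (t : ℕ) + 1, by have := t.isLt; omega⟩ ≠ 0 := by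
        intro h
        rw [← h0] at h
        have := σ.injective h
        have := congrArg Fin.val this
        simp at this
      have hne2 : σ ⟨2 * (t : ℕ) + 2, by have := t.isLt; omega⟩ ≠ 0 := by
        intro h
        rw [← h0] at h
        have := σ.injective h
        have := congrArg Fin.val this
        simp at this
      have hv1 : ((σ ⟨2 * (t : ℕ) + 1, by have := t.isLt; omega⟩ : Fin (2*d+1)) : ℕ) ≠ 0 := by
        intro h; exact hne1 (Fin.ext (by simpa using h))
      have hv2 : ((σ ⟨2 * (t : ℕ) + 2, by have := t.isLt; omega⟩ : Fin (2*d+1)) : ℕ) ≠ 0 := by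
        intro h; exact hne2 (Fin.ext (by simpa using h))
      apply hβzero _ _ hv1 hv2
      rcases ht with ht | ht
      · left
        have : (⟨2 * (t : ℕ) + 1, by have := t.isLt; omega⟩ : Fin (2*d+1)) = k :=
          Fin.ext (by simpa using ht.symm)
        rw [this, hk]
        simpa using hm1
      · right
        have : (⟨2 * (t : ℕ) + 2, by have := t.isLt; omega⟩ : Fin (2*d+1)) = k :=
          Fin.ext (by simpa using ht.symm)
        rw [this, hk]
        simpa using hm1
    have hklt : (k : ℕ) < 2 * d + 1 := k.isLt
    rcases Nat.even_or_odd (k : ℕ) with ⟨t, htk⟩ | ⟨t, htk⟩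
    · -- even: k = 2t = 2(t-1)+2, t ≥ 1
      have ht1 : 1 ≤ t := by omega
      have htd : t - 1 < d := by omega
      rw [hprod ⟨t - 1, htd⟩ (Or.inr (by simp only [Fin.val_mk]; omega)), mul_zero, mul_zero]
    · -- odd: k = 2t+1
      have htd : t < d := by omega
      rw [hprod ⟨t, htd⟩ (Or.inl (by simp only [Fin.val_mk]; omega)), mul_zero, mul_zero]
  · have h0v : ((σ 0 : Fin (2*d+1)) : ℕ) ≠ 0 := by
      intro h; exact h0 (Fin.ext (by simpa using h))
    rw [hαzero _ h0v, zero_mul, mul_zero]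
end

section
/- Let ms, Ms, mu, Mu be real numbers with 0 < ms ≤ Ms < 1 < mu ≤ Mu, and let r ≥ 1. If both bunching inequalities Ms · Mu^r < mu and Ms < mu · ms^r hold, then r < 2. -/
/-- The two bunching inequalities `Ms · Mu^r < mu` and `Ms < mu · ms^r`
(with `0 < ms ≤ Ms < 1 < mu ≤ Mu`) force `r < 2`. -/
theorem stmt_2 (ms Ms mu Mu r : ℝ)
    (h0 : 0 < ms) (h1 : ms ≤ Ms) (h2 : Ms < 1) (h3 : 1 < mu) (h4 : mu ≤ Mu)
    (hr : 1 ≤ r)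
    (hbu : Ms * Mu ^ r < mu)
    (hbs : Ms < mu * ms ^ r) :
    r < 2 := by
  by_contra h
  push_neg at h
  set s : ℝ := r - 1 with hsdef
  have hs1 : 1 ≤ s := by simp only [hsdef]; linarith
  have hs0 : 0 < s := by linarith
  have hmu0 : (0:ℝ) < mu := by linarith
  have hMu0 : (0:ℝ) < Mu := by linarith
  have hMs0 : (0:ℝ) < Ms := lt_of_lt_of_le h0 h1
  have hrs : r = s + 1 := by ring
  -- Claim A : Ms * mu^s < 1
  have hMur : Mu ^ r = Mu ^ s * Mu := by
    rw [hrs, Real.rpow_add hMu0, Real.rpow_one]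
  have hmsu : mu ^ s ≤ Mu ^ s := Real.rpow_le_rpow hmu0.le h4 hs0.le
  have hA : Ms * mu ^ s < 1 := by
    have h1' : Ms * (Mu ^ s * Mu) < Mu := by
      rw [← hMur]; exact lt_of_lt_of_le hbu h4
    have h2' : Ms * Mu ^ s < 1 :=
      (mul_lt_iff_lt_one_left hMu0).mp (by rw [mul_assoc]; exact h1')
    have : Ms * mu ^ s ≤ Ms * Mu ^ s :=
      mul_le_mul_of_nonneg_left hmsu hMs0.le
    linarith
  -- Claim B : 1 < mu * Ms^s
  have hmsr : ms ^ r = ms ^ s * ms := by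
    rw [hrs, Real.rpow_add h0, Real.rpow_one]
  have hB : 1 < mu * Ms ^ s := by
    have hle : ms ^ s ≤ Ms ^ s := Real.rpow_le_rpow h0.le h1 hs0.le
    have : Ms < mu * Ms ^ s * Ms := by
      calc Ms < mu * (ms ^ s * ms) := by rw [← hmsr]; exact hbs
        _ ≤ mu * (Ms ^ s * Ms) := by
            apply mul_le_mul_of_nonneg_left _ hmu0.le
            exact mul_le_mul hle h1 h0.le (Real.rpow_nonneg hMs0.le s)
        _ = mu * Ms ^ s * Ms := by ring
    exact (lt_mul_iff_one_lt_left hMs0).mp this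
  -- combine: Ms < mu^(-s)
  have hpos : 0 < mu ^ s := Real.rpow_pos_of_pos hmu0 s
  have hApow : Ms < mu ^ (-s) := by
    rw [Real.rpow_neg hmu0.le]
    nlinarith [mul_inv_cancel₀ (ne_of_gt hpos), inv_pos.mpr hpos]
  -- Ms^s < mu^(-s*s)
  have hstep : Ms ^ s < mu ^ (-s * s) := by
    have := Real.rpow_lt_rpow hMs0.le hApow hs0
    rwa [Real.rpow_mul hmu0.le]
  -- mu⁻¹ < Ms^s
  have hBpow : mu ^ (-1 : ℝ) < Ms ^ s := by
    rw [Real.rpow_neg_one]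
    have hMsS : 0 < Ms ^ s := Real.rpow_pos_of_pos hMs0 s
    nlinarith [mul_inv_cancel₀ (ne_of_gt hmu0), inv_pos.mpr hmu0]
  have hfin : mu ^ (-1 : ℝ) < mu ^ (-s * s) := lt_trans hBpow hstep
  have := (Real.rpow_lt_rpow_left_iff h3).mp hfin
  nlinarith
end

section
/- Let E be a finite-dimensional normed real vector space, κ > 0, C ≥ 0, and let (A_n) be a sequence of continuous linear isomorphisms of E and (g_n) a sequence of C¹ maps of E with g_n(0) = 0 and D_0 g_n = Id, such that: (i) f := A_n⁻¹ ∘ g_n ∘ A_n is the same map f for all n; (ii) ‖A_n‖ → 0 and ‖A_n⁻¹‖ · ‖A_n‖^{1+κ} → 0 as n → ∞; (iii) ‖D_w g_n − Id‖ ≤ C‖w‖^κ for all n and all w with ‖w‖ ≤ 1. Then f(z) = z for all z with ‖z‖ ≤ 1. -/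
open Filter Metric

/-!
Near `0` the Hölder bound on `D gₙ - Id` and the mean value inequality give
`‖gₙ w - w‖ ≤ C‖w‖^{1+κ}`. Conjugating back, `‖f z - z‖ ≤ C ‖Aₙ⁻¹‖ ‖Aₙ z‖^{1+κ}
≤ C ‖Aₙ⁻¹‖ ‖Aₙ‖^{1+κ}` once `‖Aₙ‖ ≤ 1`, and the right-hand side tends to `0`.
-/

section

variable {E F : Type*} [NormedAddCommGroup E] [NormedSpace ℝ E]
  [NormedAddCommGroup F] [NormedSpace ℝ F]

theorem norm_sub_self_le_rpow_of_norm_fderiv_sub_id_le {g : E → E} {κ C : ℝ}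
    (hκ : 0 ≤ κ) (hC : 0 ≤ C) (hg : Differentiable ℝ g) (hg0 : g 0 = 0)
    (hhold : ∀ w : E, ‖w‖ ≤ 1 → ‖fderiv ℝ g w - ContinuousLinearMap.id ℝ E‖ ≤ C * ‖w‖ ^ κ)
    {w : E} (hw : ‖w‖ ≤ 1) :
    ‖g w - w‖ ≤ C * ‖w‖ ^ (1 + κ) := by
  have hbound : ∀ x ∈ closedBall (0 : E) ‖w‖,
      ‖fderiv ℝ g x - ContinuousLinearMap.id ℝ E‖ ≤ C * ‖w‖ ^ κ := by
    intro x hx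
    rw [mem_closedBall_zero_iff] at hx
    exact (hhold x (hx.trans hw)).trans (by gcongr)
  have hmvt := (convex_closedBall (0 : E) ‖w‖).norm_image_sub_le_of_norm_fderiv_le'
    (fun x _ => hg x) hbound (mem_closedBall_self (norm_nonneg w))
    (mem_closedBall_zero_iff.mpr le_rfl)
  rw [Real.rpow_one_add' (norm_nonneg w) (by positivity)]
  simpa [hg0, mul_comm, mul_left_comm] using hmvt

theorem norm_sub_self_le_of_conj {A : E ≃L[ℝ] F} {g : F → F} {f : E → E} {p C : ℝ}
    (hp : 0 ≤ p) (hC : 0 ≤ C) (hconj : ∀ x, A.symm (g (A x)) = f x)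
    (hg : ∀ w : F, ‖w‖ ≤ 1 → ‖g w - w‖ ≤ C * ‖w‖ ^ p)
    (hA : ‖(A : E →L[ℝ] F)‖ ≤ 1) {z : E} (hz : ‖z‖ ≤ 1) :
    ‖f z - z‖ ≤ C * (‖(A.symm : F →L[ℝ] E)‖ * ‖(A : E →L[ℝ] F)‖ ^ p) := by
  have hAz : ‖A z‖ ≤ ‖(A : E →L[ℝ] F)‖ :=
    ((A : E →L[ℝ] F).le_opNorm z).trans (mul_le_of_le_one_right (norm_nonneg _) hz)
  have hfz : f z - z = A.symm (g (A z) - A z) := by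
    rw [map_sub, hconj, A.symm_apply_apply]
  calc ‖f z - z‖ ≤ ‖(A.symm : F →L[ℝ] E)‖ * ‖g (A z) - A z‖ := by
        rw [hfz]; exact (A.symm : F →L[ℝ] E).le_opNorm _
    _ ≤ ‖(A.symm : F →L[ℝ] E)‖ * (C * ‖A z‖ ^ p) := by
        gcongr; exact hg _ (hAz.trans hA)
    _ ≤ C * (‖(A.symm : F →L[ℝ] E)‖ * ‖(A : E →L[ℝ] F)‖ ^ p) := by
        rw [mul_left_comm]; gcongr

end

theorem stmt_6_general (E : Type*) [NormedAddCommGroup E] [NormedSpace ℝ E]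
    (κ C : ℝ) (hκ : 0 < κ) (hC : 0 ≤ C)
    (A : ℕ → (E ≃L[ℝ] E)) (g : ℕ → E → E) (f : E → E)
    (hg : ∀ n, ContDiff ℝ 1 (g n))
    (hg0 : ∀ n, g n 0 = 0)
    (hconj : ∀ n, ∀ x : E, (A n).symm (g n (A n x)) = f x)
    (hAn : Tendsto (fun n => ‖((A n : E →L[ℝ] E))‖) atTop (nhds 0))
    (hAn' : Tendsto
      (fun n => ‖((A n).symm : E →L[ℝ] E)‖ * ‖((A n : E →L[ℝ] E))‖ ^ (1 + κ))
      atTop (nhds 0))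
    (hhold : ∀ n, ∀ w : E, ‖w‖ ≤ 1 →
      ‖fderiv ℝ (g n) w - ContinuousLinearMap.id ℝ E‖ ≤ C * ‖w‖ ^ κ) :
    ∀ z : E, ‖z‖ ≤ 1 → f z = z := by
  intro z hz
  have hbound : ∀ᶠ n in atTop, ‖f z - z‖ ≤
      C * (‖((A n).symm : E →L[ℝ] E)‖ * ‖((A n : E →L[ℝ] E))‖ ^ (1 + κ)) := by
    filter_upwards [hAn.eventually_le_const zero_lt_one] with n hn
    exact norm_sub_self_le_of_conj (by positivity) hC (hconj n)
      (fun w => norm_sub_self_le_rpow_of_norm_fderiv_sub_id_le hκ.le hC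
        ((hg n).differentiable one_ne_zero) (hg0 n) (hhold n)) hn hz
  have hzero : ‖f z - z‖ ≤ 0 := ge_of_tendsto (by simpa using hAn'.const_mul C) hbound
  exact sub_eq_zero.mp (norm_le_zero_iff.mp hzero)

/-- Discrete-time uniqueness for non-stationary linearizations: if a map `f` is
simultaneously conjugated, `f = Aₙ⁻¹ ∘ gₙ ∘ Aₙ`, to C¹ maps `gₙ` fixing `0` with
`D₀gₙ = Id` and Hölder control `‖D_w gₙ − Id‖ ≤ C‖w‖^κ` on the unit ball, where
`‖Aₙ‖ → 0` and `‖Aₙ⁻¹‖·‖Aₙ‖^{1+κ} → 0`, then `f` is the identity on the unit ball. -/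
theorem stmt_6 (E : Type*) [NormedAddCommGroup E] [NormedSpace ℝ E]
    [FiniteDimensional ℝ E]
    (κ C : ℝ) (hκ : 0 < κ) (hC : 0 ≤ C)
    (A : ℕ → (E ≃L[ℝ] E)) (g : ℕ → E → E) (f : E → E)
    (hg : ∀ n, ContDiff ℝ 1 (g n))
    (hg0 : ∀ n, g n 0 = 0)
    (hgD : ∀ n, fderiv ℝ (g n) 0 = ContinuousLinearMap.id ℝ E)
    (hconj : ∀ n, ∀ x : E, (A n).symm (g n (A n x)) = f x)
    (hAn : Tendsto (fun n => ‖((A n : E →L[ℝ] E))‖) atTop (nhds 0))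
    (hAn' : Tendsto
      (fun n => ‖((A n).symm : E →L[ℝ] E)‖ * ‖((A n : E →L[ℝ] E))‖ ^ (1 + κ))
      atTop (nhds 0))
    (hhold : ∀ n, ∀ w : E, ‖w‖ ≤ 1 →
      ‖fderiv ℝ (g n) w - ContinuousLinearMap.id ℝ E‖ ≤ C * ‖w‖ ^ κ) :
    ∀ z : E, ‖z‖ ≤ 1 → f z = z :=
  stmt_6_general E κ C hκ hC A g f hg hg0 hconj hAn hAn' hhold
end

section
/- Let a > 1 and let u : [0,∞) → ℝ be twice differentiable with u(0) = 1, u bounded on [0,∞), and u''(t) = k(t) u(t) where 1 ≤ k(t) ≤ a² for all t ≥ 0, and u(t) > 0 for all t ≥ 0. Then e^{−a t} ≤ u(t) ≤ e^{−t} for all t ≥ 0. -/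
/-!
Since `u'' = k u ≥ 0`, the bounded function `u` is convex, hence nonincreasing. The function
`f = u' + u` satisfies `f' = k u + u' ≥ f`, so once positive it grows like `eᵗ`; as `f ≤ u`,
this contradicts boundedness, whence `u' ≤ -u`. Dually `g = u' + a u` satisfies `g' ≤ a g`, so
once negative it stays below the negative constant `g(t₀)`; then `u' ≤ g(t₀)` drives `u` below
zero, whence `u' ≥ -a u`. Integrating `-a u ≤ u' ≤ -u` from `u(0) = 1` gives the two bounds.
-/

open Filter Real Set

section Comparison

variable {f f' : ℝ → ℝ} {s : ℝ}

theorem monotoneOn_Ici_of_hasDerivAt_nonneg (hf : ∀ t ∈ Ici s, HasDerivAt f (f' t) t)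
    (hf' : ∀ t ∈ Ici s, 0 ≤ f' t) : MonotoneOn f (Ici s) := by
  refine monotoneOn_of_hasDerivWithinAt_nonneg (f' := f') (convex_Ici s)
    (fun t ht => (hf t ht).continuousAt.continuousWithinAt) (fun t ht => ?_) (fun t ht => ?_)
  all_goals rw [interior_Ici] at ht
  · exact (hf t (Ioi_subset_Ici_self ht)).hasDerivWithinAt
  · exact hf' t (Ioi_subset_Ici_self ht)

theorem mul_sub_le_image_sub_of_le_hasDerivAt_Ici {C : ℝ}
    (hf : ∀ t ∈ Ici s, HasDerivAt f (f' t) t) (hC : ∀ t ∈ Ici s, C ≤ f' t)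
    {t : ℝ} (ht : s ≤ t) : C * (t - s) ≤ f t - f s := by
  have hmono : MonotoneOn (fun t => f t - C * t) (Ici s) :=
    monotoneOn_Ici_of_hasDerivAt_nonneg
      (fun t ht => ((hf t ht).sub ((hasDerivAt_id t).const_mul C)).congr_deriv (by simp))
      (fun t ht => sub_nonneg.mpr (hC t ht))
  have := hmono self_mem_Ici ht ht
  simp only at this
  linarith

theorem image_sub_le_mul_sub_of_hasDerivAt_le_Ici {C : ℝ}
    (hf : ∀ t ∈ Ici s, HasDerivAt f (f' t) t) (hC : ∀ t ∈ Ici s, f' t ≤ C)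
    {t : ℝ} (ht : s ≤ t) : f t - f s ≤ C * (t - s) := by
  have := mul_sub_le_image_sub_of_le_hasDerivAt_Ici (f := fun t => -f t)
    (fun t ht => (hf t ht).neg) (fun t ht => neg_le_neg (hC t ht)) ht
  linarith

theorem mul_exp_le_of_mul_le_hasDerivAt_Ici {c : ℝ}
    (hf : ∀ t ∈ Ici s, HasDerivAt f (f' t) t) (hc : ∀ t ∈ Ici s, c * f t ≤ f' t)
    {t : ℝ} (ht : s ≤ t) : f s * exp (c * (t - s)) ≤ f t := by
  have hmono : MonotoneOn (fun t => exp (-(c * t)) * f t) (Ici s) := by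
    refine monotoneOn_Ici_of_hasDerivAt_nonneg
      (f' := fun t => exp (-(c * t)) * (f' t - c * f t)) (fun t ht => ?_) (fun t ht => ?_)
    · exact (((hasDerivAt_id t).const_mul c).neg.exp.mul (hf t ht)).congr_deriv (by simp; ring)
    · exact mul_nonneg (exp_pos _).le (sub_nonneg.mpr (hc t ht))
  have key := mul_le_mul_of_nonneg_left (hmono self_mem_Ici ht ht) (exp_pos (c * t)).le
  simp only [← mul_assoc, ← exp_add] at key
  rwa [add_neg_cancel, exp_zero, one_mul, ← sub_eq_add_neg, ← mul_sub, mul_comm] at key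

theorem le_mul_exp_of_hasDerivAt_le_mul_Ici {c : ℝ}
    (hf : ∀ t ∈ Ici s, HasDerivAt f (f' t) t) (hc : ∀ t ∈ Ici s, f' t ≤ c * f t)
    {t : ℝ} (ht : s ≤ t) : f t ≤ f s * exp (c * (t - s)) := by
  have := mul_exp_le_of_mul_le_hasDerivAt_Ici (f := fun t => -f t)
    (fun t ht => (hf t ht).neg) (fun t ht => by have := hc t ht; linarith) ht
  linarith

end Comparison

section SecondOrder

variable {u u' u'' : ℝ → ℝ} {s : ℝ}

theorem deriv_nonpos_of_convex_of_bddAbove_Ici (hu : ∀ t ∈ Ici s, HasDerivAt u (u' t) t)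
    (hu' : ∀ t ∈ Ici s, HasDerivAt u' (u'' t) t) (hconv : ∀ t ∈ Ici s, 0 ≤ u'' t)
    (hbdd : BddAbove (u '' Ici s)) : ∀ t ∈ Ici s, u' t ≤ 0 := by
  intro t₀ ht₀
  by_contra! hpos
  obtain ⟨C, hC⟩ := hbdd
  have hsub : Ici t₀ ⊆ Ici s := Ici_subset_Ici.mpr ht₀
  have hu'_mono : MonotoneOn u' (Ici t₀) :=
    monotoneOn_Ici_of_hasDerivAt_nonneg (fun t ht => hu' t (hsub ht))
      (fun t ht => hconv t (hsub ht))
  have hgrowth : ∀ t ∈ Ici t₀, u t₀ + u' t₀ * (t - t₀) ≤ u t := fun t ht => by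
    have := mul_sub_le_image_sub_of_le_hasDerivAt_Ici (fun t ht => hu t (hsub ht))
      (fun t ht => hu'_mono self_mem_Ici ht ht) ht
    linarith
  have htend : Tendsto (fun t => u t₀ + u' t₀ * (t - t₀)) atTop atTop :=
    tendsto_atTop_add_const_left _ _
      ((tendsto_atTop_add_const_right _ _ tendsto_id).const_mul_atTop hpos)
  obtain ⟨t, hCt, ht⟩ := ((htend.eventually_gt_atTop C).and (eventually_ge_atTop t₀)).exists
  linarith [hC (mem_image_of_mem u (hsub ht)), hgrowth t ht]

theorem deriv_le_neg_mul_of_sq_mul_le_second_deriv {c : ℝ} (hc : 0 < c)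
    (hu : ∀ t ∈ Ici s, HasDerivAt u (u' t) t) (hu' : ∀ t ∈ Ici s, HasDerivAt u' (u'' t) t)
    (hu'_nonpos : ∀ t ∈ Ici s, u' t ≤ 0) (hcomp : ∀ t ∈ Ici s, c ^ 2 * u t ≤ u'' t)
    (hbdd : BddAbove (u '' Ici s)) : ∀ t ∈ Ici s, u' t ≤ -c * u t := by
  intro t₀ ht₀
  by_contra! hpos
  obtain ⟨C, hC⟩ := hbdd
  have hsub : Ici t₀ ⊆ Ici s := Ici_subset_Ici.mpr ht₀
  have hgrowth : ∀ t ∈ Ici t₀, (u' t₀ + c * u t₀) * exp (c * (t - t₀)) ≤ c * u t :=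
    fun t ht => by
      have := mul_exp_le_of_mul_le_hasDerivAt_Ici (c := c) (f := fun t => u' t + c * u t)
        (fun t ht => (hu' t (hsub ht)).add ((hu t (hsub ht)).const_mul c))
        (fun t ht => by nlinarith [hcomp t (hsub ht)]) ht
      linarith [hu'_nonpos t (hsub ht)]
  have htend : Tendsto (fun t => (u' t₀ + c * u t₀) * exp (c * (t - t₀))) atTop atTop :=
    (tendsto_exp_atTop.comp
      ((tendsto_atTop_add_const_right _ _ tendsto_id).const_mul_atTop hc)).const_mul_atTop
      (by linarith)
  obtain ⟨t, hCt, ht⟩ :=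
    ((htend.eventually_gt_atTop (c * C)).and (eventually_ge_atTop t₀)).exists
  nlinarith [hC (mem_image_of_mem u (hsub ht)), hgrowth t ht]

theorem neg_mul_le_deriv_of_second_deriv_le_sq_mul {a : ℝ} (ha : 0 ≤ a)
    (hu : ∀ t ∈ Ici s, HasDerivAt u (u' t) t) (hu' : ∀ t ∈ Ici s, HasDerivAt u' (u'' t) t)
    (hcomp : ∀ t ∈ Ici s, u'' t ≤ a ^ 2 * u t) (hpos : ∀ t ∈ Ici s, 0 < u t) :
    ∀ t ∈ Ici s, -a * u t ≤ u' t := by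
  intro t₀ ht₀
  by_contra! hneg
  have hsub : Ici t₀ ⊆ Ici s := Ici_subset_Ici.mpr ht₀
  set m := u' t₀ + a * u t₀
  have hdecay : ∀ t ∈ Ici t₀, u' t ≤ m := fun t ht => by
    have := le_mul_exp_of_hasDerivAt_le_mul_Ici (c := a) (f := fun t => u' t + a * u t)
      (fun t ht => (hu' t (hsub ht)).add ((hu t (hsub ht)).const_mul a))
      (fun t ht => by nlinarith [hcomp t (hsub ht)]) ht
    have := one_le_exp (mul_nonneg ha (sub_nonneg.mpr ht))
    nlinarith [hpos t (hsub ht)]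
  have hlin : ∀ t ∈ Ici t₀, u t ≤ u t₀ + m * (t - t₀) := fun t ht => by
    have := image_sub_le_mul_sub_of_hasDerivAt_le_Ici (fun t ht => hu t (hsub ht)) hdecay ht
    linarith
  have htend : Tendsto (fun t => u t₀ + m * (t - t₀)) atTop atBot :=
    tendsto_atBot_add_const_left _ _
      ((tendsto_atTop_add_const_right _ _ tendsto_id).const_mul_atTop_of_neg (by linarith))
  obtain ⟨t, hlt, ht⟩ := ((htend.eventually_lt_atBot 0).and (eventually_ge_atTop t₀)).exists
  linarith [hpos t (hsub ht), hlin t ht]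

end SecondOrder

/-- Sturm/Riccati comparison: a bounded positive solution of `u'' = k·u` with
`1 ≤ k ≤ a²` on `[0,∞)` and `u(0) = 1` satisfies `e^{−at} ≤ u(t) ≤ e^{−t}`. -/
theorem stmt_10 (a : ℝ) (ha : 1 < a) (u u' u'' k : ℝ → ℝ)
    (hu : ∀ t ∈ Set.Ici (0 : ℝ), HasDerivAt u (u' t) t)
    (hu' : ∀ t ∈ Set.Ici (0 : ℝ), HasDerivAt u' (u'' t) t)
    (hode : ∀ t ≥ (0 : ℝ), u'' t = k t * u t)
    (hk : ∀ t ≥ (0 : ℝ), 1 ≤ k t ∧ k t ≤ a ^ 2)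
    (hu0 : u 0 = 1)
    (hpos : ∀ t ≥ (0 : ℝ), 0 < u t)
    (hbdd : ∃ Cb : ℝ, ∀ t ≥ (0 : ℝ), |u t| ≤ Cb) :
    ∀ t ≥ (0 : ℝ), Real.exp (-(a * t)) ≤ u t ∧ u t ≤ Real.exp (-t) := by
  obtain ⟨C, hC⟩ := hbdd
  have hbdd : BddAbove (u '' Ici 0) :=
    ⟨C, by rintro _ ⟨t, ht, rfl⟩; exact (abs_le.mp (hC t ht)).2⟩
  have hconv : ∀ t ∈ Ici (0 : ℝ), 0 ≤ u'' t := fun t ht => by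
    rw [hode t ht]; nlinarith [(hk t ht).1, hpos t ht]
  have hu'_nonpos := deriv_nonpos_of_convex_of_bddAbove_Ici hu hu' hconv hbdd
  have hupper := deriv_le_neg_mul_of_sq_mul_le_second_deriv (c := 1) one_pos hu hu' hu'_nonpos
    (fun t ht => by rw [hode t ht]; nlinarith [(hk t ht).1, hpos t ht]) hbdd
  have hlower := neg_mul_le_deriv_of_second_deriv_le_sq_mul (a := a) (by linarith) hu hu'
    (fun t ht => by rw [hode t ht]; nlinarith [(hk t ht).2, hpos t ht]) hpos
  intro t ht
  constructor
  · simpa [hu0] using mul_exp_le_of_mul_le_hasDerivAt_Ici hu hlower ht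
  · simpa [hu0] using le_mul_exp_of_hasDerivAt_le_mul_Ici hu hupper ht
end

section
/- Let E be a normed real vector space, A : E ≃ E a continuous linear isomorphism which is a strict contraction (‖A‖ < 1), and f : E → E a continuous map with f(0) = 0 satisfying A ∘ f = f ∘ A. If f is differentiable at 0 with D_0 f = Id, and f is Lipschitz, then for every z, (A⁻¹)ⁿ f(Aⁿ z) → z as n → ∞. -/
open Filter Topology

/-- Linearization uniqueness: if a Lipschitz continuous map `f` fixing `0`, which is
differentiable at `0` with `D₀f = Id`, commutes with a linear contraction `A`
(`‖A‖ < 1`), then `(A⁻¹)ⁿ f(Aⁿ z) → z` for every `z`; and if moreover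
`‖A⁻¹‖·‖A‖^{1+κ} < 1` and `‖D_w f − Id‖ ≤ C‖w‖^κ` near `0` for some `κ > 0`,
`C ≥ 0`, then `f = Id` near `0`. -/
theorem stmt_11 (E : Type*) [NormedAddCommGroup E] [NormedSpace ℝ E]
    (A : E ≃L[ℝ] E) (hA : ‖(A : E →L[ℝ] E)‖ < 1)
    (f : E → E) (hfc : Continuous f) (hf0 : f 0 = 0)
    (hcomm : ∀ x : E, A (f x) = f (A x))
    (hdiff : DifferentiableAt ℝ f 0)
    (hD0 : fderiv ℝ f 0 = ContinuousLinearMap.id ℝ E)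
    (hlip : ∃ K : NNReal, LipschitzWith K f)
    (κ C : ℝ) (hκ : 0 < κ) (hC : 0 ≤ C)
    (hcontr : ‖(A.symm : E →L[ℝ] E)‖ * ‖(A : E →L[ℝ] E)‖ ^ (1 + κ) < 1)
    (hhold : ∃ δ > (0 : ℝ), ∀ w : E, ‖w‖ ≤ δ →
      ‖fderiv ℝ f w - ContinuousLinearMap.id ℝ E‖ ≤ C * ‖w‖ ^ κ) :
    (∀ z : E, Tendsto (fun n => (fun x => A.symm x)^[n] (f ((fun x => A x)^[n] z)))
      atTop (nhds z))
    ∧ ∃ ε > (0 : ℝ), ∀ z : E, ‖z‖ ≤ ε → f z = z := by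
  set a : ℝ := ‖(A : E →L[ℝ] E)‖ with ha_def
  set b : ℝ := ‖(A.symm : E →L[ℝ] E)‖ with hb_def
  have ha0 : 0 ≤ a := norm_nonneg _
  have hb0 : 0 ≤ b := norm_nonneg _
  -- iterated commutation
  have hcommn : ∀ (n : ℕ) (x : E), (fun x => A x)^[n] (f x) = f ((fun x => A x)^[n] x) := by
    intro n
    induction n with
    | zero => intro x; simp
    | succ n ih =>
        intro x
        rw [Function.iterate_succ_apply', Function.iterate_succ_apply', ih, hcomm]
  have hleft : ∀ (n : ℕ) (x : E), (fun x => A.symm x)^[n] ((fun x => A x)^[n] x) = x := by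
    intro n
    exact Function.LeftInverse.iterate (fun y => A.symm_apply_apply y) n
  have hconst : ∀ (n : ℕ) (z : E),
      (fun x => A.symm x)^[n] (f ((fun x => A x)^[n] z)) = f z := by
    intro n z
    rw [← hcommn, hleft]
  -- norm bounds for iterates
  have hAn : ∀ (n : ℕ) (z : E), ‖(fun x => A x)^[n] z‖ ≤ a ^ n * ‖z‖ := by
    intro n
    induction n with
    | zero => intro z; simp
    | succ n ih =>
        intro z
        rw [Function.iterate_succ_apply']
        calc ‖A ((fun x => A x)^[n] z)‖ = ‖(A : E →L[ℝ] E) ((fun x => A x)^[n] z)‖ := by simp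
          _ ≤ a * ‖(fun x => A x)^[n] z‖ := ContinuousLinearMap.le_opNorm _ _
          _ ≤ a * (a ^ n * ‖z‖) := by
              exact mul_le_mul_of_nonneg_left (ih z) ha0
          _ = a ^ (n + 1) * ‖z‖ := by ring
  have hBn : ∀ (n : ℕ) (u v : E),
      ‖(fun x => A.symm x)^[n] u - (fun x => A.symm x)^[n] v‖ ≤ b ^ n * ‖u - v‖ := by
    intro n
    induction n with
    | zero => intro u v; simp
    | succ n ih =>
        intro u v
        rw [Function.iterate_succ_apply', Function.iterate_succ_apply']
        calc ‖A.symm ((fun x => A.symm x)^[n] u) - A.symm ((fun x => A.symm x)^[n] v)‖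
            = ‖(A.symm : E →L[ℝ] E) ((fun x => A.symm x)^[n] u - (fun x => A.symm x)^[n] v)‖ := by
              rw [map_sub]; simp
          _ ≤ b * ‖(fun x => A.symm x)^[n] u - (fun x => A.symm x)^[n] v‖ :=
              ContinuousLinearMap.le_opNorm _ _
          _ ≤ b * (b ^ n * ‖u - v‖) := mul_le_mul_of_nonneg_left (ih u v) hb0
          _ = b ^ (n + 1) * ‖u - v‖ := by ring
  -- reduce everything to f = id
  suffices hfid : ∀ z : E, f z = z by
    refine ⟨fun z => ?_, 1, one_pos, fun z _ => hfid z⟩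
    have : (fun n : ℕ => (fun x => A.symm x)^[n] (f ((fun x => A x)^[n] z))) = fun _ => z := by
      funext n; rw [hconst, hfid]
    rw [this]
    exact tendsto_const_nhds
  rcases subsingleton_or_nontrivial E with hE | hE
  · intro z; exact Subsingleton.elim _ _
  obtain ⟨δ, hδ0, hδ⟩ := hhold
  set r : ℝ := min δ ((2 * C + 2)⁻¹ ^ (1 / κ)) with hr_def
  have h2C : (0 : ℝ) < (2 * C + 2)⁻¹ := by positivity
  have hr0 : 0 < r := lt_min hδ0 (Real.rpow_pos_of_pos h2C _)
  have hrδ : r ≤ δ := min_le_left _ _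
  have hCr : C * r ^ κ < 1 := by
    have h1 : r ^ κ ≤ ((2 * C + 2)⁻¹ ^ (1 / κ)) ^ κ :=
      Real.rpow_le_rpow hr0.le (min_le_right _ _) hκ.le
    have h2 : ((2 * C + 2)⁻¹ ^ (1 / κ)) ^ κ = (2 * C + 2)⁻¹ := by
      rw [← Real.rpow_mul h2C.le, one_div_mul_cancel hκ.ne', Real.rpow_one]
    have h3 : C * r ^ κ ≤ C * (2 * C + 2)⁻¹ := by
      apply mul_le_mul_of_nonneg_left _ hC
      rw [← h2]; exact h1
    have h4 : C * (2 * C + 2)⁻¹ < 1 := by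
      rw [mul_inv_lt_iff₀ (by positivity)]
      linarith
    linarith
  -- differentiability on the ball
  have hdiffball : ∀ w : E, ‖w‖ ≤ r → DifferentiableAt ℝ f w := by
    intro w hw
    by_contra h
    have h0 : fderiv ℝ f w = 0 := fderiv_zero_of_not_differentiableAt h
    have h1 := hδ w (hw.trans hrδ)
    rw [h0, zero_sub, norm_neg, ContinuousLinearMap.norm_id] at h1
    have h2 : C * ‖w‖ ^ κ ≤ C * r ^ κ :=
      mul_le_mul_of_nonneg_left (Real.rpow_le_rpow (norm_nonneg w) hw hκ.le) hC
    linarith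
  -- mean value estimate
  have hest : ∀ w : E, ‖w‖ ≤ r → ‖f w - w‖ ≤ C * ‖w‖ ^ κ * ‖w‖ := by
    intro w hw
    have hconv : Convex ℝ (Metric.closedBall (0 : E) ‖w‖) := convex_closedBall _ _
    have hmem : ∀ u ∈ Metric.closedBall (0 : E) ‖w‖, ‖u‖ ≤ ‖w‖ := by
      intro u hu
      simpa [Metric.mem_closedBall, dist_eq_norm] using hu
    have hderiv : ∀ u ∈ Metric.closedBall (0 : E) ‖w‖,
        HasFDerivWithinAt (fun x => f x - x) (fderiv ℝ f u - ContinuousLinearMap.id ℝ E)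
          (Metric.closedBall (0 : E) ‖w‖) u := by
      intro u hu
      exact (((hdiffball u ((hmem u hu).trans hw)).hasFDerivAt).sub
        (hasFDerivAt_id u)).hasFDerivWithinAt
    have hbound : ∀ u ∈ Metric.closedBall (0 : E) ‖w‖,
        ‖fderiv ℝ f u - ContinuousLinearMap.id ℝ E‖ ≤ C * ‖w‖ ^ κ := by
      intro u hu
      refine (hδ u (((hmem u hu).trans hw).trans hrδ)).trans ?_
      exact mul_le_mul_of_nonneg_left
        (Real.rpow_le_rpow (norm_nonneg u) (hmem u hu) hκ.le) hC
    have h0mem : (0 : E) ∈ Metric.closedBall (0 : E) ‖w‖ := by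
      simp [Metric.mem_closedBall]
    have hwmem : w ∈ Metric.closedBall (0 : E) ‖w‖ := by
      simp [Metric.mem_closedBall, dist_eq_norm]
    have := hconv.norm_image_sub_le_of_norm_hasFDerivWithin_le hderiv hbound h0mem hwmem
    simpa [hf0] using this
  -- positivity of ‖A‖
  have hapos : 0 < a := by
    rcases exists_ne (0 : E) with ⟨x, hx⟩
    have : (A : E →L[ℝ] E) ≠ 0 := by
      intro h
      apply hx
      have : A x = 0 := by
        have := congrFun (congrArg DFunLike.coe h) x
        simpa using this
      have := A.injective (by simpa using this)
      simpa using this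
    rcases (norm_nonneg (A : E →L[ℝ] E)).lt_or_eq with h | h
    · exact h
    · exact absurd ((ContinuousLinearMap.opNorm_zero_iff _).mp h.symm) this
  set q : ℝ := b * a ^ (1 + κ) with hq_def
  have hq0 : 0 ≤ q := mul_nonneg hb0 (Real.rpow_nonneg ha0 _)
  have hpowcast : ∀ n : ℕ, (a ^ κ) ^ n = (a ^ n) ^ κ := by
    intro n
    rw [← Real.rpow_natCast (a ^ κ) n, ← Real.rpow_natCast a n,
      ← Real.rpow_mul ha0, ← Real.rpow_mul ha0, mul_comm]
  have hqn : ∀ n : ℕ, q ^ n = b ^ n * (a ^ n) ^ κ * a ^ n := by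
    intro n
    have h1 : q = b * (a * a ^ κ) := by
      rw [hq_def, Real.rpow_add hapos, Real.rpow_one]
    rw [h1, mul_pow, mul_pow, hpowcast]
    ring
  -- local identity
  have hlocal : ∀ w : E, ‖w‖ ≤ r → f w = w := by
    intro w hw
    have key : ∀ n : ℕ, ‖f w - w‖ ≤ C * q ^ n * (‖w‖ ^ κ * ‖w‖) := by
      intro n
      have hAnw : ‖(fun x => A x)^[n] w‖ ≤ a ^ n * ‖w‖ := hAn n w
      have hAnw' : ‖(fun x => A x)^[n] w‖ ≤ r := by
        refine hAnw.trans ?_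
        calc a ^ n * ‖w‖ ≤ 1 * r := by
              exact mul_le_mul (pow_le_one₀ ha0 hA.le) hw (norm_nonneg w) one_pos.le
          _ = r := one_mul r
      calc ‖f w - w‖
          = ‖(fun x => A.symm x)^[n] (f ((fun x => A x)^[n] w))
              - (fun x => A.symm x)^[n] ((fun x => A x)^[n] w)‖ := by
            rw [hconst, hleft]
        _ ≤ b ^ n * ‖f ((fun x => A x)^[n] w) - (fun x => A x)^[n] w‖ := hBn n _ _
        _ ≤ b ^ n * (C * ‖(fun x => A x)^[n] w‖ ^ κ * ‖(fun x => A x)^[n] w‖) :=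
            mul_le_mul_of_nonneg_left (hest _ hAnw') (pow_nonneg hb0 n)
        _ ≤ b ^ n * (C * (a ^ n * ‖w‖) ^ κ * (a ^ n * ‖w‖)) := by
            apply mul_le_mul_of_nonneg_left _ (pow_nonneg hb0 n)
            apply mul_le_mul
            · exact mul_le_mul_of_nonneg_left
                (Real.rpow_le_rpow (norm_nonneg _) hAnw hκ.le) hC
            · exact hAnw
            · exact norm_nonneg _
            · positivity
        _ = C * q ^ n * (‖w‖ ^ κ * ‖w‖) := by
            rw [Real.mul_rpow (pow_nonneg ha0 n) (norm_nonneg w), hqn]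
            ring
    have h0 : Tendsto (fun n : ℕ => C * q ^ n * (‖w‖ ^ κ * ‖w‖)) atTop (nhds 0) := by
      have := tendsto_pow_atTop_nhds_zero_of_lt_one hq0 hcontr
      have := (this.const_mul C).mul_const (‖w‖ ^ κ * ‖w‖)
      simpa using this
    have hle : ‖f w - w‖ ≤ 0 := ge_of_tendsto' h0 key
    have := norm_le_zero_iff.mp hle
    exact sub_eq_zero.mp this
  -- globalize
  intro z
  have htz : Tendsto (fun n : ℕ => a ^ n * ‖z‖) atTop (nhds 0) := by
    have := (tendsto_pow_atTop_nhds_zero_of_lt_one ha0 hA).mul_const ‖z‖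
    simpa using this
  have hev : ∀ᶠ n in atTop, a ^ n * ‖z‖ < r := htz.eventually (gt_mem_nhds hr0)
  obtain ⟨n, hn⟩ := hev.exists
  have hAnz : ‖(fun x => A x)^[n] z‖ ≤ r := (hAn n z).trans hn.le
  calc f z = (fun x => A.symm x)^[n] (f ((fun x => A x)^[n] z)) := (hconst n z).symm
    _ = (fun x => A.symm x)^[n] ((fun x => A x)^[n] z) := by rw [hlocal _ hAnz]
    _ = z := hleft n z
end
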